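/- If V is a g-module in Cₙ (h acts diagonalizably with integer eigenvalues in [-n,n]), then every element v ∈ V can be written as a finite sum v = Σ e^i v_i where each v_i is primitive, i.e., f v_i = 0. -/

import Mathlib

/-- A module over the 5-dimensional Lie superalgebra `g` (generators `e, f, h, d, δ` with
graded commutation relations `[e,f]=h`, `[e,h]=-2e`, `[f,h]=2f`, `[e,d]=0`, `[f,d]=δ`,
`[h,d]=d`, `[e,δ]=d`, `[f,δ]=0`, `[h,δ]=-δ`, `d²=δ²=0`, `dδ+δd=0`) lying in the category
`𝒞ₙ`: the operator `h` acts diagonalizably with integer eigenvalues, all in `[-n, n]`.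
This is encoded by a weight-space decomposition `V = ⊕ weight i`, `-n ≤ i ≤ n`, on which
`h` acts by the scalar `i`, and with respect to which `e, f, d, δ` have degrees
`+2, -2, +1, -1` respectively. -/
structure GRep (n : ℕ) (V : Type*) [AddCommGroup V] [Module ℝ V] where
  e : Module.End ℝ V
  f : Module.End ℝ V
  h : Module.End ℝ V
  d : Module.End ℝ V
  δ : Module.End ℝ V
  comm_ef : e * f - f * e = h
  comm_eh : e * h - h * e = (-2 : ℝ) • e
  comm_fh : f * h - h * f = (2 : ℝ) • f
  comm_ed : e * d - d * e = 0
  comm_fd : f * d - d * f = δ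
  comm_hd : h * d - d * h = d
  comm_eδ : e * δ - δ * e = d
  comm_fδ : f * δ - δ * f = 0
  comm_hδ : h * δ - δ * h = -δ
  d_sq : d * d = 0
  δ_sq : δ * δ = 0
  comm_dδ : d * δ + δ * d = 0
  weight : ℤ → Submodule ℝ V
  weight_isInternal : DirectSum.IsInternal weight
  weight_bounded : ∀ i : ℤ, (n : ℤ) < |i| → weight i = ⊥
  h_weight : ∀ i : ℤ, ∀ v ∈ weight i, h v = (i : ℝ) • v
  e_weight : ∀ i : ℤ, ∀ v ∈ weight i, e v ∈ weight (i + 2)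
  f_weight : ∀ i : ℤ, ∀ v ∈ weight i, f v ∈ weight (i - 2)
  d_weight : ∀ i : ℤ, ∀ v ∈ weight i, d v ∈ weight (i + 1)
  δ_weight : ∀ i : ℤ, ∀ v ∈ weight i, δ v ∈ weight (i - 1)

namespace GRep

open Polynomial

variable {n : ℕ} {V : Type*} [AddCommGroup V] [Module ℝ V] (g : GRep n V)

/-- The scalar `μ² - 2μ` by which the Casimir acts at the bottom of weight `μ`. -/
noncomputable def s2 (μ : ℤ) : ℝ := (μ : ℝ) ^ 2 - 2 * (μ : ℝ)

lemma s2_ne {τ μ : ℤ} (h1 : τ ≠ μ) (h2 : τ + μ ≠ 2) : s2 τ ≠ s2 μ := by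
  intro H
  have hfac : ((τ - μ : ℤ) : ℝ) * ((τ + μ - 2 : ℤ) : ℝ) = 0 := by
    push_cast
    unfold s2 at H
    nlinarith [H]
  rcases mul_eq_zero.mp hfac with h | h
  · exact h1 (by exact_mod_cast sub_eq_zero.mp (by exact_mod_cast h))
  · have : (τ + μ - 2 : ℤ) = 0 := by exact_mod_cast h
    omega

lemma ef_fe (x : V) : g.e (g.f x) - g.f (g.e x) = g.h x := by
  have := LinearMap.ext_iff.mp g.comm_ef x
  simpa [LinearMap.sub_apply, Module.End.mul_apply] using this

lemma e_pow_mem {τ : ℤ} {x : V} (hx : x ∈ g.weight τ) (k : ℕ) :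
    (g.e ^ k) x ∈ g.weight (τ + 2 * k) := by
  induction k with
  | zero => simpa using hx
  | succ k ih =>
    have h2 : τ + 2 * ((k : ℤ) + 1) = (τ + 2 * k) + 2 := by ring
    rw [pow_succ', Module.End.mul_apply]
    push_cast
    rw [h2]
    exact g.e_weight _ _ ih

lemma f_pow_mem {τ : ℤ} {x : V} (hx : x ∈ g.weight τ) (k : ℕ) :
    (g.f ^ k) x ∈ g.weight (τ - 2 * k) := by
  induction k with
  | zero => simpa using hx
  | succ k ih =>
    have h2 : τ - 2 * ((k : ℤ) + 1) = (τ - 2 * k) - 2 := by ring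
    rw [pow_succ', Module.End.mul_apply]
    push_cast
    rw [h2]
    exact g.f_weight _ _ ih

lemma mem_weight_out {τ : ℤ} (hτ : (n : ℤ) < |τ|) {x : V} (hx : x ∈ g.weight τ) : x = 0 := by
  rw [g.weight_bounded τ hτ] at hx
  simpa using hx

lemma e_pow_eq_zero {τ : ℤ} {x : V} (hx : x ∈ g.weight τ) : (g.e ^ (n + 1)) x = 0 := by
  rcases le_or_gt (|τ|) (n : ℤ) with h | h
  · obtain ⟨h1, h2⟩ := abs_le.mp h
    apply g.mem_weight_out _ (g.e_pow_mem hx (n + 1))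
    rw [lt_abs]; left; push_cast; omega
  · rw [g.mem_weight_out h hx, map_zero]

lemma f_pow_eq_zero {τ : ℤ} {x : V} (hx : x ∈ g.weight τ) : (g.f ^ (n + 1)) x = 0 := by
  rcases le_or_gt (|τ|) (n : ℤ) with h | h
  · obtain ⟨h1, h2⟩ := abs_le.mp h
    apply g.mem_weight_out _ (g.f_pow_mem hx (n + 1))
    rw [lt_abs]; right; push_cast; omega
  · rw [g.mem_weight_out h hx, map_zero]

lemma e_pow_eq_zero_ge {τ : ℤ} {x : V} (hx : x ∈ g.weight τ) {k : ℕ} (hk : n + 1 ≤ k) :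
    (g.e ^ k) x = 0 := by
  obtain ⟨m, rfl⟩ := Nat.exists_eq_add_of_le hk
  rw [add_comm, pow_add, Module.End.mul_apply, g.e_pow_eq_zero hx, map_zero]

lemma f_pow_eq_zero_ge {τ : ℤ} {x : V} (hx : x ∈ g.weight τ) {k : ℕ} (hk : n + 1 ≤ k) :
    (g.f ^ k) x = 0 := by
  obtain ⟨m, rfl⟩ := Nat.exists_eq_add_of_le hk
  rw [add_comm, pow_add, Module.End.mul_apply, g.f_pow_eq_zero hx, map_zero]

/-- Twice the Casimir operator (times 2 to avoid fractions): `4ef - 2h + h²`. -/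
noncomputable def Cas : Module.End ℝ V :=
  (4 : ℝ) • (g.e * g.f) - (2 : ℝ) • g.h + g.h * g.h

lemma cas_apply {τ : ℤ} {x : V} (hx : x ∈ g.weight τ) :
    g.Cas x = (4 : ℝ) • g.e (g.f x) + s2 τ • x := by
  have hh := g.h_weight τ x hx
  unfold Cas s2
  simp only [LinearMap.add_apply, LinearMap.sub_apply, LinearMap.smul_apply,
    Module.End.mul_apply, hh, map_smul, smul_smul]
  module

lemma ef_eq {τ : ℤ} {x : V} (hx : x ∈ g.weight τ) :
    (4 : ℝ) • g.e (g.f x) = g.Cas x - s2 τ • x := by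
  rw [g.cas_apply hx]; abel

lemma fe_eq {τ : ℤ} {x : V} (hx : x ∈ g.weight τ) :
    (4 : ℝ) • g.f (g.e x) = g.Cas x - s2 (τ + 2) • x := by
  have hfe : g.f (g.e x) = g.e (g.f x) - (τ : ℝ) • x := by
    have hr := g.ef_fe x
    rw [g.h_weight τ x hx] at hr
    rw [← hr]; abel
  rw [hfe, smul_sub, g.ef_eq hx]
  have : s2 (τ + 2) = s2 τ + 4 * (τ : ℝ) := by unfold s2; push_cast; ring
  rw [this]
  module

lemma cas_mem {τ : ℤ} {x : V} (hx : x ∈ g.weight τ) : g.Cas x ∈ g.weight τ := by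
  rw [g.cas_apply hx]
  have h1 : g.e (g.f x) ∈ g.weight τ := by
    have := g.e_weight _ _ (g.f_weight _ _ hx)
    simpa using this
  exact Submodule.add_mem _ (Submodule.smul_mem _ _ h1) (Submodule.smul_mem _ _ hx)

lemma cas_comm_f {τ : ℤ} {x : V} (hx : x ∈ g.weight τ) :
    g.f (g.Cas x) = g.Cas (g.f x) := by
  have h1 : g.f (g.Cas x) = (4 : ℝ) • g.f (g.e (g.f x)) + s2 τ • g.f x := by
    rw [g.cas_apply hx, map_add, map_smul, map_smul]
  have h2 := g.fe_eq (g.f_weight τ x hx)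
  have h3 : τ - 2 + 2 = τ := by ring
  rw [h3] at h2
  rw [h1, h2]; abel

lemma cas_comm_e {τ : ℤ} {x : V} (hx : x ∈ g.weight τ) :
    g.e (g.Cas x) = g.Cas (g.e x) := by
  have hfe : g.f (g.e x) = g.e (g.f x) - (τ : ℝ) • x := by
    have hr := g.ef_fe x
    rw [g.h_weight τ x hx] at hr
    rw [← hr]; abel
  have h1 : g.e (g.Cas x) = (4 : ℝ) • g.e (g.e (g.f x)) + s2 τ • g.e x := by
    rw [g.cas_apply hx, map_add, map_smul, map_smul]
  have h2 : g.Cas (g.e x) = (4 : ℝ) • g.e (g.f (g.e x)) + s2 (τ + 2) • g.e x :=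
    g.cas_apply (g.e_weight τ x hx)
  rw [h1, h2, hfe, map_sub, map_smul]
  have hs : s2 (τ + 2) = s2 τ + 4 * (τ : ℝ) := by unfold s2; push_cast; ring
  rw [hs]
  module

lemma cas_pow_mem {τ : ℤ} {x : V} (hx : x ∈ g.weight τ) (k : ℕ) :
    (g.Cas ^ k) x ∈ g.weight τ := by
  induction k with
  | zero => simpa using hx
  | succ k ih => rw [pow_succ', Module.End.mul_apply]; exact g.cas_mem ih

lemma cas_pow_comm_f {τ : ℤ} {x : V} (hx : x ∈ g.weight τ) (k : ℕ) :
    g.f ((g.Cas ^ k) x) = (g.Cas ^ k) (g.f x) := by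
  induction k with
  | zero => simp
  | succ k ih =>
    rw [pow_succ', Module.End.mul_apply, Module.End.mul_apply,
      g.cas_comm_f (g.cas_pow_mem hx k), ih]

lemma cas_pow_comm_e {τ : ℤ} {x : V} (hx : x ∈ g.weight τ) (k : ℕ) :
    g.e ((g.Cas ^ k) x) = (g.Cas ^ k) (g.e x) := by
  induction k with
  | zero => simp
  | succ k ih =>
    rw [pow_succ', Module.End.mul_apply, Module.End.mul_apply,
      g.cas_comm_e (g.cas_pow_mem hx k), ih]

lemma aeval_apply_eq_sum (p : ℝ[X]) (x : V) :
    (Polynomial.aeval g.Cas p) x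
      = ∑ i ∈ Finset.range (p.natDegree + 1), p.coeff i • (g.Cas ^ i) x := by
  rw [Polynomial.aeval_eq_sum_range]
  simp [LinearMap.sum_apply, LinearMap.smul_apply]

lemma aeval_mem {τ : ℤ} {x : V} (hx : x ∈ g.weight τ) (p : ℝ[X]) :
    (Polynomial.aeval g.Cas p) x ∈ g.weight τ := by
  rw [g.aeval_apply_eq_sum]
  exact Submodule.sum_mem _ fun i _ => Submodule.smul_mem _ _ (g.cas_pow_mem hx i)

lemma aeval_comm_f {τ : ℤ} {x : V} (hx : x ∈ g.weight τ) (p : ℝ[X]) :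
    g.f ((Polynomial.aeval g.Cas p) x) = (Polynomial.aeval g.Cas p) (g.f x) := by
  rw [g.aeval_apply_eq_sum, g.aeval_apply_eq_sum, map_sum]
  refine Finset.sum_congr rfl fun i _ => ?_
  rw [map_smul, g.cas_pow_comm_f hx i]

lemma aeval_comm_e {τ : ℤ} {x : V} (hx : x ∈ g.weight τ) (p : ℝ[X]) :
    g.e ((Polynomial.aeval g.Cas p) x) = (Polynomial.aeval g.Cas p) (g.e x) := by
  rw [g.aeval_apply_eq_sum, g.aeval_apply_eq_sum, map_sum]
  refine Finset.sum_congr rfl fun i _ => ?_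
  rw [map_smul, g.cas_pow_comm_e hx i]

lemma aeval_comm_f_pow {τ : ℤ} {x : V} (hx : x ∈ g.weight τ) (p : ℝ[X]) (m : ℕ) :
    (g.f ^ m) ((Polynomial.aeval g.Cas p) x) = (Polynomial.aeval g.Cas p) ((g.f ^ m) x) := by
  induction m with
  | zero => simp
  | succ m ih =>
    rw [pow_succ', Module.End.mul_apply, Module.End.mul_apply, ih,
      g.aeval_comm_f (g.f_pow_mem hx m)]

lemma aeval_comm_e_pow {τ : ℤ} {x : V} (hx : x ∈ g.weight τ) (p : ℝ[X]) (m : ℕ) :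
    (g.e ^ m) ((Polynomial.aeval g.Cas p) x) = (Polynomial.aeval g.Cas p) ((g.e ^ m) x) := by
  induction m with
  | zero => simp
  | succ m ih =>
    rw [pow_succ', Module.End.mul_apply, Module.End.mul_apply, ih,
      g.aeval_comm_e (g.e_pow_mem hx m)]

lemma cas_pow_eigen {c : ℝ} {x : V} (hc : g.Cas x = c • x) (k : ℕ) :
    (g.Cas ^ k) x = (c ^ k) • x := by
  induction k with
  | zero => simp
  | succ k ih =>
    rw [pow_succ', Module.End.mul_apply, ih, map_smul, hc, smul_smul, pow_succ]

lemma aeval_eigen {c : ℝ} {x : V} (hc : g.Cas x = c • x) (p : ℝ[X]) :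
    (Polynomial.aeval g.Cas p) x = p.eval c • x := by
  rw [g.aeval_apply_eq_sum, Polynomial.eval_eq_sum_range, Finset.sum_smul]
  refine Finset.sum_congr rfl fun i _ => ?_
  rw [g.cas_pow_eigen hc, smul_smul]

lemma chain_f {s : ℝ} {k : ℕ} {τ : ℤ} {y : V} (hy : y ∈ g.weight τ)
    (hann : (Polynomial.aeval g.Cas ((X - C s) ^ k)) y = 0) (m : ℕ)
    (hbad : ∀ j : ℕ, j < m → s ≠ s2 (τ - 2 * j))
    (hy0 : y ≠ 0) : (g.f ^ m) y ≠ 0 := by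
  induction m with
  | zero => simpa using hy0
  | succ m ih =>
    have hz : (g.f ^ m) y ≠ 0 := ih fun j hj => hbad j (Nat.lt_succ_of_lt hj)
    intro h0
    have hzm : (g.f ^ m) y ∈ g.weight (τ - 2 * m) := g.f_pow_mem hy m
    have hfz : g.f ((g.f ^ m) y) = 0 := by
      rw [pow_succ', Module.End.mul_apply] at h0; exact h0
    have hcz : g.Cas ((g.f ^ m) y) = s2 (τ - 2 * m) • ((g.f ^ m) y) := by
      have h4 := g.ef_eq hzm
      rw [hfz, map_zero, smul_zero] at h4
      exact sub_eq_zero.mp h4.symm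
    have hz2 : (Polynomial.aeval g.Cas ((X - C s) ^ k)) ((g.f ^ m) y) = 0 := by
      rw [← g.aeval_comm_f_pow hy _ m, hann, map_zero]
    rw [g.aeval_eigen hcz] at hz2
    have heval : Polynomial.eval (s2 (τ - 2 * m)) ((X - C s) ^ k)
        = (s2 (τ - 2 * m) - s) ^ k := by
      simp [Polynomial.eval_pow]
    rw [heval] at hz2
    have hne : (s2 (τ - 2 * m) - s) ^ k ≠ 0 :=
      pow_ne_zero _ (sub_ne_zero.mpr (Ne.symm (hbad m (Nat.lt_succ_self m))))
    exact hz ((smul_eq_zero.mp hz2).resolve_left hne)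

lemma chain_e {s : ℝ} {k : ℕ} {τ : ℤ} {y : V} (hy : y ∈ g.weight τ)
    (hann : (Polynomial.aeval g.Cas ((X - C s) ^ k)) y = 0) (m : ℕ)
    (hbad : ∀ j : ℕ, j < m → s ≠ s2 (τ + 2 * j + 2))
    (hy0 : y ≠ 0) : (g.e ^ m) y ≠ 0 := by
  induction m with
  | zero => simpa using hy0
  | succ m ih =>
    have hz : (g.e ^ m) y ≠ 0 := ih fun j hj => hbad j (Nat.lt_succ_of_lt hj)
    intro h0
    have hzm : (g.e ^ m) y ∈ g.weight (τ + 2 * m) := g.e_pow_mem hy m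
    have hez : g.e ((g.e ^ m) y) = 0 := by
      rw [pow_succ', Module.End.mul_apply] at h0; exact h0
    have hcz : g.Cas ((g.e ^ m) y) = s2 (τ + 2 * m + 2) • ((g.e ^ m) y) := by
      have h4 := g.fe_eq hzm
      rw [hez, map_zero, smul_zero] at h4
      exact sub_eq_zero.mp h4.symm
    have hz2 : (Polynomial.aeval g.Cas ((X - C s) ^ k)) ((g.e ^ m) y) = 0 := by
      rw [← g.aeval_comm_e_pow hy _ m, hann, map_zero]
    rw [g.aeval_eigen hcz] at hz2
    have heval : Polynomial.eval (s2 (τ + 2 * m + 2)) ((X - C s) ^ k)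
        = (s2 (τ + 2 * m + 2) - s) ^ k := by
      simp [Polynomial.eval_pow]
    rw [heval] at hz2
    have hne : (s2 (τ + 2 * m + 2) - s) ^ k ≠ 0 :=
      pow_ne_zero _ (sub_ne_zero.mpr (Ne.symm (hbad m (Nat.lt_succ_self m))))
    exact hz ((smul_eq_zero.mp hz2).resolve_left hne)


end GRep

lemma pow_succ_apply {V : Type*} [AddCommGroup V] [Module ℝ V]
    (A : Module.End ℝ V) (k : ℕ) (w : V) :
    (A ^ (k + 1)) w = A ((A ^ k) w) := by
  rw [pow_succ', Module.End.mul_apply]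

namespace GRep

open Polynomial

variable {n : ℕ} {V : Type*} [AddCommGroup V] [Module ℝ V] (g : GRep n V)

lemma e_f_pow_swap {σ : ℤ} {z : V} (hz : z ∈ g.weight σ) (a : ℕ) :
    ∃ c : ℝ, g.e ((g.f ^ (a + 1)) z) = (g.f ^ (a + 1)) (g.e z) + c • (g.f ^ a) z := by
  induction a with
  | zero =>
    refine ⟨(σ : ℝ), ?_⟩
    have hr := g.ef_fe z
    rw [g.h_weight σ z hz, sub_eq_iff_eq_add] at hr
    rw [pow_succ_apply, pow_succ_apply]
    simp only [pow_zero, Module.End.one_apply]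
    rw [hr]; abel
  | succ a ih =>
    obtain ⟨c, hc⟩ := ih
    refine ⟨c + ((σ : ℝ) - 2 * ((a : ℝ) + 1)), ?_⟩
    have hu : (g.f ^ (a + 1)) z ∈ g.weight (σ - 2 * ((a + 1 : ℕ) : ℤ)) :=
      g.f_pow_mem hz (a + 1)
    have hr := g.ef_fe ((g.f ^ (a + 1)) z)
    rw [g.h_weight _ _ hu, sub_eq_iff_eq_add] at hr
    rw [pow_succ_apply g.f (a + 1) z, hr, hc, map_add, map_smul,
      ← pow_succ_apply g.f (a + 1) (g.e z), ← pow_succ_apply g.f a z]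
    push_cast
    module

lemma exists_ann {τ : ℤ} {x : V} (hx : x ∈ g.weight τ) :
    ∃ p : ℝ[X], p ≠ 0 ∧ (Polynomial.aeval g.Cas p) x = 0 := by
  classical
  by_cases hx0 : x = 0
  · exact ⟨1, one_ne_zero, by rw [hx0, map_zero]⟩
  set B := n + 1 with hB
  set F0 : Fin (B + 1) × Fin (B + 1) → V :=
    fun ab => (g.f ^ (ab.1 : ℕ)) ((g.e ^ (ab.2 : ℕ)) x) with hF0
  set T : Submodule ℝ V := Submodule.span ℝ (Set.range F0) with hT
  haveI : FiniteDimensional ℝ T := FiniteDimensional.span_of_finite ℝ (Set.finite_range F0)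
  have hgen : ∀ a b : ℕ, a ≤ B → b ≤ B → (g.f ^ a) ((g.e ^ b) x) ∈ T := by
    intro a b ha hb
    apply Submodule.subset_span
    exact ⟨(⟨a, Nat.lt_succ_of_le ha⟩, ⟨b, Nat.lt_succ_of_le hb⟩), rfl⟩
  have hgen' : ∀ a b : ℕ, (g.f ^ a) ((g.e ^ b) x) ∈ T := by
    intro a b
    rcases le_or_gt b B with hb | hb
    · rcases le_or_gt a B with ha | ha
      · exact hgen a b ha hb
      · rw [g.f_pow_eq_zero_ge (g.e_pow_mem hx b) (by omega)]
        exact Submodule.zero_mem T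
    · rw [g.e_pow_eq_zero_ge hx (by omega), map_zero]
      exact Submodule.zero_mem T
  have hCT : ∀ y ∈ T, g.Cas y ∈ T := by
    intro y hy
    refine Submodule.span_induction ?_ ?_ ?_ ?_ hy
    · rintro _ ⟨⟨a, b⟩, rfl⟩
      have hzb : (g.e ^ (b : ℕ)) x ∈ g.weight (τ + 2 * (b : ℕ)) := g.e_pow_mem hx _
      have hmem : (g.f ^ (a : ℕ)) ((g.e ^ (b : ℕ)) x)
          ∈ g.weight (τ + 2 * (b : ℕ) - 2 * (a : ℕ)) := g.f_pow_mem hzb _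
      rw [g.cas_apply hmem]
      obtain ⟨c, hc⟩ := g.e_f_pow_swap hzb (a : ℕ)
      have hfy : g.f ((g.f ^ (a : ℕ)) ((g.e ^ (b : ℕ)) x))
          = (g.f ^ ((a : ℕ) + 1)) ((g.e ^ (b : ℕ)) x) := (pow_succ_apply _ _ _).symm
      rw [hfy, hc, ← pow_succ_apply g.e (b : ℕ) x]
      refine Submodule.add_mem _ (Submodule.smul_mem _ _ ?_) (Submodule.smul_mem _ _ ?_)
      · exact Submodule.add_mem _ (hgen' _ _) (Submodule.smul_mem _ _ (hgen' _ _))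
      · exact hgen' _ _
    · rw [map_zero]; exact Submodule.zero_mem T
    · intro u v _ _ hu hv
      rw [map_add]; exact Submodule.add_mem _ hu hv
    · intro r u _ hu
      rw [map_smul]; exact Submodule.smul_mem _ _ hu
  set CT : Module.End ℝ T := g.Cas.restrict hCT with hCT_def
  have hint : IsIntegral ℝ CT := Algebra.IsIntegral.isIntegral CT
  haveI : Nontrivial T := by
    have hxT : x ∈ T := by simpa using hgen 0 0 (Nat.zero_le _) (Nat.zero_le _)
    exact ⟨⟨⟨x, hxT⟩, 0, by simp [Subtype.ext_iff, hx0]⟩⟩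
  refine ⟨minpoly ℝ CT, minpoly.ne_zero hint, ?_⟩
  have hxT : x ∈ T := by simpa using hgen 0 0 (Nat.zero_le _) (Nat.zero_le _)
  have hres : ∀ (q : ℝ[X]) (y : V) (hy : y ∈ T),
      (Polynomial.aeval g.Cas q) y = ((Polynomial.aeval CT q) ⟨y, hy⟩ : T) := by
    intro q y hy
    have hpow : ∀ (i : ℕ), (g.Cas ^ i) y = ((CT ^ i) ⟨y, hy⟩ : T) := by
      intro i
      rw [hCT_def, Module.End.pow_restrict]
      rw [LinearMap.restrict_apply]
    rw [g.aeval_apply_eq_sum, Polynomial.aeval_eq_sum_range]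
    rw [LinearMap.sum_apply]
    rw [Submodule.coe_sum]
    refine Finset.sum_congr rfl fun i _ => ?_
    rw [LinearMap.smul_apply, Submodule.coe_smul, hpow i]
  rw [hres _ x hxT, minpoly.aeval]
  simp


lemma isCoprime_lin (s : ℝ) {q : ℝ[X]} (hq : q.eval s ≠ 0) : IsCoprime (X - C s) q := by
  obtain ⟨r, hr⟩ := Polynomial.X_sub_C_dvd_sub_C_eval (a := s) (p := q)
  refine ⟨-(C (q.eval s)⁻¹ * r), C (q.eval s)⁻¹, ?_⟩
  have : (X - C s) * r = q - C (q.eval s) := hr.symm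
  have h1 : C (q.eval s)⁻¹ * C (q.eval s) = 1 := by
    rw [← Polynomial.C_mul, inv_mul_cancel₀ hq, Polynomial.C_1]
  calc -(C (q.eval s)⁻¹ * r) * (X - C s) + C (q.eval s)⁻¹ * q
      = C (q.eval s)⁻¹ * (q - (X - C s) * r) := by ring
    _ = C (q.eval s)⁻¹ * C (q.eval s) := by rw [this]; ring_nf
    _ = 1 := h1

lemma step_weight {μ : ℤ} {v : V} (hv : v ∈ g.weight μ) :
    ∃ w y : V, g.f w = 0 ∧ v = w + g.e y := by
  classical
  obtain ⟨p1, hp1, hp1v⟩ := g.exists_ann hv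
  have hfv : g.f v ∈ g.weight (μ - 2) := g.f_weight _ _ hv
  obtain ⟨p2, hp2, hp2fv⟩ := g.exists_ann hfv
  set p := p1 * p2 with hp_def
  have hp : p ≠ 0 := mul_ne_zero hp1 hp2
  have hpv : (Polynomial.aeval g.Cas p) v = 0 := by
    rw [hp_def, mul_comm, map_mul, Module.End.mul_apply, hp1v, map_zero]
  have hpfv : (Polynomial.aeval g.Cas p) (g.f v) = 0 := by
    rw [hp_def, map_mul, Module.End.mul_apply, hp2fv, map_zero]
  set s : ℝ := s2 μ with hs_def
  set k := p.rootMultiplicity s with hk_def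
  set q := p /ₘ (X - C s) ^ k with hq_def
  have hfac : (X - C s) ^ k * q = p := Polynomial.pow_mul_divByMonic_rootMultiplicity_eq p s
  have hqs : q.eval s ≠ 0 := Polynomial.eval_divByMonic_pow_rootMultiplicity_ne_zero s hp
  have hcop1 : IsCoprime (X - C s) q := isCoprime_lin s hqs
  have hcop : IsCoprime ((X - C s) ^ k) q := hcop1.pow_left
  obtain ⟨a, b, hab⟩ := hcop
  -- split f v
  set ybad := (Polynomial.aeval g.Cas (b * q)) (g.f v) with hybad_def
  set ygood := (Polynomial.aeval g.Cas (a * (X - C s) ^ k)) (g.f v) with hygood_def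
  have hsplit : g.f v = ygood + ybad := by
    have h1 : (Polynomial.aeval g.Cas (a * (X - C s) ^ k + b * q)) (g.f v) = g.f v := by
      rw [hab, map_one, Module.End.one_apply]
    rw [map_add, LinearMap.add_apply] at h1
    exact h1.symm
  have hybad_mem : ybad ∈ g.weight (μ - 2) := g.aeval_mem hfv _
  have hygood_mem : ygood ∈ g.weight (μ - 2) := g.aeval_mem hfv _
  have hybad_ann : (Polynomial.aeval g.Cas ((X - C s) ^ k)) ybad = 0 := by
    rw [hybad_def, ← Module.End.mul_apply, ← map_mul]
    have : (X - C s) ^ k * (b * q) = b * p := by rw [← hfac]; ring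
    rw [this, map_mul, Module.End.mul_apply, hpfv, map_zero]
  have hybad : ybad = 0 := by
    rcases le_or_gt μ 1 with hμ | hμ
    · by_contra hne
      refine g.chain_f hybad_mem hybad_ann (n + 1) ?_ hne (g.f_pow_eq_zero hybad_mem)
      intro j hj
      rw [hs_def]
      apply s2_ne <;> omega
    · -- μ ≥ 2 : kill the bad part of v itself
      set vbad := (Polynomial.aeval g.Cas (b * q)) v with hvbad_def
      have hvmem : vbad ∈ g.weight μ := g.aeval_mem hv _
      have hvann : (Polynomial.aeval g.Cas ((X - C s) ^ k)) vbad = 0 := by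
        rw [hvbad_def, ← Module.End.mul_apply, ← map_mul]
        have : (X - C s) ^ k * (b * q) = b * p := by rw [← hfac]; ring
        rw [this, map_mul, Module.End.mul_apply, hpv, map_zero]
      have hv0 : vbad = 0 := by
        by_contra hne
        refine g.chain_e hvmem hvann (n + 1) ?_ hne (g.e_pow_eq_zero hvmem)
        intro j hj
        rw [hs_def]
        apply s2_ne <;> omega
      rw [hybad_def, ← g.aeval_comm_f hv, ← hvbad_def, hv0, map_zero]
  have hfv_good : g.f v = ygood := by rw [hsplit, hybad, add_zero]
  have hq_good : (Polynomial.aeval g.Cas q) ygood = 0 := by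
    rw [hygood_def, ← Module.End.mul_apply, ← map_mul]
    have : q * (a * (X - C s) ^ k) = a * p := by rw [← hfac]; ring
    rw [this, map_mul, Module.End.mul_apply, hpfv, map_zero]
  obtain ⟨a2, b2, hab2⟩ := hcop1
  set x2 := (Polynomial.aeval g.Cas a2) ygood with hx2_def
  have hx2_mem : x2 ∈ g.weight (μ - 2) := g.aeval_mem hygood_mem _
  have hgood_eq : ygood = g.Cas x2 - s • x2 := by
    have h1 : (Polynomial.aeval g.Cas (a2 * (X - C s) + b2 * q)) ygood = ygood := by
      rw [hab2, map_one, Module.End.one_apply]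
    rw [map_add, LinearMap.add_apply] at h1
    have h2 : (Polynomial.aeval g.Cas (b2 * q)) ygood = 0 := by
      rw [map_mul, Module.End.mul_apply, hq_good, map_zero]
    have h3 : (Polynomial.aeval g.Cas (a2 * (X - C s))) ygood
        = g.Cas x2 - s • x2 := by
      have hcomm : a2 * (X - C s) = (X - C s) * a2 := by ring
      rw [hcomm, map_mul, Module.End.mul_apply, ← hx2_def, map_sub,
        Polynomial.aeval_X, Polynomial.aeval_C, LinearMap.sub_apply]
      simp [Module.algebraMap_end_apply]
    rw [h2, add_zero, h3] at h1
    exact h1.symm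
  have hfe2 := g.fe_eq hx2_mem
  have hμeq : μ - 2 + 2 = μ := by ring
  rw [hμeq] at hfe2
  have hkey : g.f v = g.f (g.e ((4 : ℝ) • x2)) := by
    rw [map_smul, map_smul, hfe2, hfv_good, hgood_eq, hs_def]
  refine ⟨v - g.e ((4 : ℝ) • x2), (4 : ℝ) • x2, ?_, by abel⟩
  rw [map_sub, hkey, sub_self]

lemma mem_iSup_weight (v : V) : v ∈ ⨆ i, g.weight i := by
  rw [g.weight_isInternal.submodule_iSup_eq_top]
  trivial

lemma step_all (v : V) : ∃ w y : V, g.f w = 0 ∧ v = w + g.e y := by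
  refine Submodule.iSup_induction (motive := fun v : V => ∃ w y : V, g.f w = 0 ∧ v = w + g.e y)
    g.weight (g.mem_iSup_weight v) ?_ ?_ ?_
  · intro i x hx
    exact g.step_weight hx
  · exact ⟨0, 0, by simp, by simp⟩
  · rintro u u' ⟨w, y, hw, hu⟩ ⟨w', y', hw', hu'⟩
    refine ⟨w + w', y + y', by rw [map_add, hw, hw', add_zero], ?_⟩
    rw [hu, hu', map_add]
    abel

lemma e_pow_all (v : V) : (g.e ^ (n + 1)) v = 0 := by
  refine Submodule.iSup_induction (motive := fun v : V => (g.e ^ (n + 1)) v = 0)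
    g.weight (g.mem_iSup_weight v) ?_ ?_ ?_
  · intro i x hx
    exact g.e_pow_eq_zero hx
  · simp
  · intro x y hx hy
    rw [map_add, hx, hy, add_zero]

lemma dec (m : ℕ) (v : V) :
    ∃ (k : ℕ) (c : Fin k → ℕ) (w : Fin k → V) (x : V),
      (∀ j, g.f (w j) = 0) ∧ v = (∑ j, (g.e ^ (c j)) (w j)) + (g.e ^ m) x := by
  induction m with
  | zero =>
    exact ⟨0, Fin.elim0, Fin.elim0, v, fun j => j.elim0, by simp⟩
  | succ m ih =>
    obtain ⟨k, c, w, x, hw, hv⟩ := ih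
    obtain ⟨w', y, hw', hx⟩ := g.step_all x
    refine ⟨k + 1, Fin.snoc c m, Fin.snoc w w', y, ?_, ?_⟩
    · intro j
      refine Fin.lastCases ?_ ?_ j
      · rw [Fin.snoc_last]; exact hw'
      · intro i; rw [Fin.snoc_castSucc]; exact hw i
    · rw [Fin.sum_univ_castSucc]
      simp only [Fin.snoc_castSucc, Fin.snoc_last]
      rw [hv, hx, map_add]
      have : (g.e ^ m) (g.e y) = (g.e ^ (m + 1)) y := by
        rw [pow_succ, Module.End.mul_apply]
      rw [this]
      abel

end GRep


/-- If `V ∈ 𝒞ₙ`, every element `v ∈ V` is a finite sum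
`v = Σ e^i v_i` with each `v_i` primitive, i.e. `f v_i = 0`. -/
theorem exists_primitive_decomposition {n : ℕ} {V : Type*} [AddCommGroup V] [Module ℝ V]
    (g : GRep n V) (v : V) :
    ∃ (k : ℕ) (c : Fin k → ℕ) (w : Fin k → V),
      (∀ j, g.f (w j) = 0) ∧ v = ∑ j, (g.e ^ (c j)) (w j) := by
  obtain ⟨k, c, w, x, hw, hv⟩ := g.dec (n + 1) v
  exact ⟨k, c, w, hw, by rw [hv, g.e_pow_all x, add_zero]⟩
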